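/- arXiv:1606.05039 — 5 statements merged into one kernel-verified Lean document; each statement's English description precedes it below -/
import Mathlib

section
/- Let f : N → C satisfy f(u² + 2v²) = f(u)² + 2·f(v)² for all positive integers u, v, and write a = f(1), b = f(2). Then f(3)² = 9a⁴, f(4)² = (27a⁴ − 3a² + 2b²)/2, f(5)² = 27a⁴ − 2a², and f(6)² = 36a⁴ − 4a² + b². -/
/-!
Every integer with two representations `u² + 2v² = x² + 2y²` yields the relation
`f(u)² + 2f(v)² = f(x)² + 2f(y)²`. The representations `3 = 1² + 2·1²`,
`27 = 3² + 2·3² = 5² + 2·1²`, `33 = 5² + 2·2² = 1² + 2·4²` and `54 = 6² + 2·3² = 2² + 2·5²`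
determine `f(3)`, `f(5)²`, `f(4)²` and `f(6)²` in turn.
-/

def PreservesForm {R : Type*} [Semiring R] (k : ℕ) (f : ℕ → R) : Prop :=
  ∀ u v : ℕ, 0 < u → 0 < v → f (u ^ 2 + k * v ^ 2) = f u ^ 2 + k * f v ^ 2

namespace PreservesForm

section Semiring

variable {R : Type*} [Semiring R] {k : ℕ} {f : ℕ → R} {u v x y n : ℕ}

theorem apply_eq (hf : PreservesForm k f) (hu : 0 < u) (hv : 0 < v)
    (h : u ^ 2 + k * v ^ 2 = n) : f n = f u ^ 2 + k * f v ^ 2 :=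
  h ▸ hf u v hu hv

theorem sq_add_eq_of_eq (hf : PreservesForm k f) (hu : 0 < u) (hv : 0 < v) (hx : 0 < x)
    (hy : 0 < y) (h : u ^ 2 + k * v ^ 2 = x ^ 2 + k * y ^ 2) :
    f u ^ 2 + k * f v ^ 2 = f x ^ 2 + k * f y ^ 2 := by
  rw [← hf u v hu hv, ← hf x y hx hy, h]

end Semiring

variable {R : Type*} [CommRing R] {f : ℕ → R}

theorem apply_three (hf : PreservesForm 2 f) : f 3 = 3 * f 1 ^ 2 := by
  have h := hf.apply_eq (n := 3) one_pos one_pos rfl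
  push_cast at h
  linear_combination h

theorem apply_five_sq (hf : PreservesForm 2 f) : f 5 ^ 2 = 27 * f 1 ^ 4 - 2 * f 1 ^ 2 := by
  have h := hf.sq_add_eq_of_eq (u := 3) (v := 3) (x := 5) (y := 1)
    (by norm_num) (by norm_num) (by norm_num) one_pos rfl
  push_cast at h
  rw [hf.apply_three] at h
  linear_combination -h

theorem two_mul_apply_four_sq (hf : PreservesForm 2 f) :
    2 * f 4 ^ 2 = 27 * f 1 ^ 4 - 3 * f 1 ^ 2 + 2 * f 2 ^ 2 := by
  have h := hf.sq_add_eq_of_eq (u := 5) (v := 2) (x := 1) (y := 4)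
    (by norm_num) (by norm_num) one_pos (by norm_num) rfl
  push_cast at h
  linear_combination -h + hf.apply_five_sq

theorem apply_six_sq (hf : PreservesForm 2 f) :
    f 6 ^ 2 = 36 * f 1 ^ 4 - 4 * f 1 ^ 2 + f 2 ^ 2 := by
  have h := hf.sq_add_eq_of_eq (u := 6) (v := 3) (x := 2) (y := 5)
    (by norm_num) (by norm_num) (by norm_num) (by norm_num) rfl
  push_cast at h
  rw [hf.apply_three] at h
  linear_combination h + 2 * hf.apply_five_sq

end PreservesForm

theorem squares_formulae_k2 (f : ℕ → ℂ)
    (hf : ∀ u v : ℕ, 0 < u → 0 < v →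
      f (u ^ 2 + 2 * v ^ 2) = f u ^ 2 + 2 * f v ^ 2)
    (a b : ℂ) (ha : a = f 1) (hb : b = f 2) :
    f 3 ^ 2 = 9 * a ^ 4 ∧
    f 4 ^ 2 = (27 * a ^ 4 - 3 * a ^ 2 + 2 * b ^ 2) / 2 ∧
    f 5 ^ 2 = 27 * a ^ 4 - 2 * a ^ 2 ∧
    f 6 ^ 2 = 36 * a ^ 4 - 4 * a ^ 2 + b ^ 2 := by
  subst ha hb
  have hf : PreservesForm 2 f := by exact_mod_cast hf
  refine ⟨by rw [hf.apply_three]; ring, ?_, hf.apply_five_sq, hf.apply_six_sq⟩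
  linear_combination hf.two_mul_apply_four_sq / 2
end

section
/- Let f : N → C satisfy f(u² + 2v²) = f(u)² + 2·f(v)² for all positive integers u, v. Then one of the following holds: (1) f(n) = 0 for every positive integer n; (2) for every positive integer n, f(n) = n whenever there exist positive integers u, v with n = u² + 2v², and f(n) = n or f(n) = −n otherwise; (3) for every positive integer n, f(n) = 1/3 whenever there exist positive integers u, v with n = u² + 2v², and f(n) = 1/3 or f(n) = −1/3 otherwise. -/
/-!
Since `f(u² + 2v²)` only depends on `u² + 2v²`, every identity `a² + 2b² = c² + 2d²` gives the
relation `f(a)² + 2 f(b)² = f(c)² + 2 f(d)²` between the squares `g(n) = f(n)²`. The family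
`(m + 5)² + 2 (m + 2)² = (m + 1)² + 2 (m + 4)²` turns this into a linear recurrence of order four,
so `g` is determined by `g(1), …, g(4)`; these are in turn polynomials in `t = f(1)²` and
`s = f(2)²`. Comparing two representations each of `54`, `99` and `123` leaves only
`(t, s) ∈ {(0, 0), (1, 4), (1/9, 1/9)}`, i.e. `g = 0`, `g(n) = n²` or `g = 1/9`. The functional
equation then fixes `f` on representable numbers; elsewhere only `f(n)²` is known.
-/

def PreservesSqAddTwoSq (f : ℕ → ℂ) : Prop :=
  ∀ u v : ℕ, 0 < u → 0 < v → f (u ^ 2 + 2 * v ^ 2) = f u ^ 2 + 2 * f v ^ 2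

theorem eq_quadratic_of_recurrence {R : Type*} [CommRing R] {g : ℕ → R} {α β : R}
    (hrec : ∀ m, g (m + 5) = g (m + 1) + 2 * g (m + 4) - 2 * g (m + 2))
    (hinit : ∀ k, 1 ≤ k → k ≤ 4 → g k = α * k ^ 2 + β) :
    ∀ n, 1 ≤ n → g n = α * n ^ 2 + β := by
  intro n
  induction n using Nat.strong_induction_on with
  | _ n ih =>
    intro hn
    rcases le_or_gt n 4 with hn4 | hn4
    · exact hinit n hn hn4
    obtain ⟨m, rfl⟩ : ∃ m, n = m + 5 := ⟨n - 5, by omega⟩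
    rw [hrec, ih (m + 1) (by omega) (by omega), ih (m + 4) (by omega) (by omega),
      ih (m + 2) (by omega) (by omega)]
    push_cast
    ring

theorem cases_of_relations {K : Type*} [Field K] [CharZero K] {t s : K}
    (h54 : s ^ 2 + 4 * t * s - 32 * t ^ 2 - s + 4 * t = 0)
    (h99 : 4 * s ^ 2 + 4 * t * s - 89 * t ^ 2 + 9 * t = 0)
    (h123 : 81 * t ^ 4 + 36 * t ^ 3 - 131 * t ^ 2 + 14 * t = 0) :
    (t = 0 ∧ s = 0) ∨ (t = 1 ∧ s = 4) ∨ (t = 1 / 9 ∧ s = 1 / 9) := by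
  have ht : t * ((t - 1) * (9 * t - 1)) = 0 := by
    linear_combination
      ((8/123) * s + (22/123) * t + (-8/41) * t * s + (-34/41) * t ^ 2) * h54 +
      ((2/123) + (-2/123) * s + (-35/246) * t + (2/41) * t * s + (29/82) * t ^ 2) * h99 +
      (5/82) * h123
  rcases mul_eq_zero.mp ht with rfl | ht
  · refine Or.inl ⟨rfl, pow_eq_zero_iff two_ne_zero |>.mp ?_⟩
    linear_combination h99 / 4
  rcases mul_eq_zero.mp ht with ht | ht
  · obtain rfl : t = 1 := by linear_combination ht
    exact Or.inr (Or.inl ⟨rfl, by linear_combination h54 / 2 - h99 / 8⟩)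
  · obtain rfl : t = 1 / 9 := by linear_combination ht / 9
    exact Or.inr (Or.inr ⟨rfl, by linear_combination (-3/2) * h54 + (3/8) * h99⟩)

namespace PreservesSqAddTwoSq

variable {f : ℕ → ℂ}

theorem sq_add_two_sq_eq (hf : PreservesSqAddTwoSq f) (a b c d : ℕ)
    (h : a ^ 2 + 2 * b ^ 2 = c ^ 2 + 2 * d ^ 2) (ha : 0 < a := by positivity)
    (hb : 0 < b := by positivity) (hc : 0 < c := by positivity) (hd : 0 < d := by positivity) :
    f a ^ 2 + 2 * f b ^ 2 = f c ^ 2 + 2 * f d ^ 2 := by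
  rw [← hf a b ha hb, ← hf c d hc hd, h]

theorem sq_recurrence (hf : PreservesSqAddTwoSq f) (m : ℕ) :
    f (m + 5) ^ 2 = f (m + 1) ^ 2 + 2 * f (m + 4) ^ 2 - 2 * f (m + 2) ^ 2 := by
  linear_combination hf.sq_add_two_sq_eq (m + 5) (m + 2) (m + 1) (m + 4) (by ring)

theorem apply_three (hf : PreservesSqAddTwoSq f) : f 3 = 3 * f 1 ^ 2 := by
  linear_combination hf 1 1 one_pos one_pos

theorem apply_eleven (hf : PreservesSqAddTwoSq f) : f 11 = 9 * (f 1 ^ 2) ^ 2 + 2 * f 1 ^ 2 := by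
  linear_combination hf 3 1 (by norm_num) one_pos + (f 3 + 3 * f 1 ^ 2) * hf.apply_three

theorem sq_five (hf : PreservesSqAddTwoSq f) : f 5 ^ 2 = 27 * (f 1 ^ 2) ^ 2 - 2 * f 1 ^ 2 := by
  linear_combination
    hf.sq_add_two_sq_eq 5 1 3 3 (by norm_num) + (3 * f 3 + 9 * f 1 ^ 2) * hf.apply_three

theorem sq_four (hf : PreservesSqAddTwoSq f) :
    f 4 ^ 2 = (27 * (f 1 ^ 2) ^ 2 - 3 * f 1 ^ 2) / 2 + f 2 ^ 2 := by
  linear_combination (hf.sq_five - hf.sq_add_two_sq_eq 5 2 1 4 (by norm_num)) / 2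

theorem sq_seven (hf : PreservesSqAddTwoSq f) : f 7 ^ 2 = 54 * (f 1 ^ 2) ^ 2 - 5 * f 1 ^ 2 := by
  linear_combination hf.sq_add_two_sq_eq 7 2 5 4 (by norm_num) + hf.sq_five + 2 * hf.sq_four

theorem sq_one_sq_two_cases (hf : PreservesSqAddTwoSq f) :
    (f 1 ^ 2 = 0 ∧ f 2 ^ 2 = 0) ∨ (f 1 ^ 2 = 1 ∧ f 2 ^ 2 = 4) ∨
      (f 1 ^ 2 = 1 / 9 ∧ f 2 ^ 2 = 1 / 9) := by
  have h6 : f 6 = f 2 ^ 2 + 2 * f 1 ^ 2 := hf 2 1 two_pos one_pos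
  have h9 : f 9 = f 1 ^ 2 + 2 * f 2 ^ 2 := hf 1 2 one_pos two_pos
  have h3 := hf.apply_three
  have h5 := hf.sq_five
  have h7 := hf.sq_seven
  have h11 := hf.apply_eleven
  apply cases_of_relations
  · linear_combination hf.sq_add_two_sq_eq 6 3 2 5 (by norm_num) + 2 * h5
      - (f 6 + f 2 ^ 2 + 2 * f 1 ^ 2) * h6 - (2 * f 3 + 6 * f 1 ^ 2) * h3
  · linear_combination hf.sq_add_two_sq_eq 9 3 1 7 (by norm_num) + 2 * h7
      - (f 9 + f 1 ^ 2 + 2 * f 2 ^ 2) * h9 - (2 * f 3 + 6 * f 1 ^ 2) * h3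
  · linear_combination hf.sq_add_two_sq_eq 11 1 5 7 (by norm_num) + h5 + 2 * h7
      - (f 11 + 9 * (f 1 ^ 2) ^ 2 + 2 * f 1 ^ 2) * h11

theorem sq_classification (hf : PreservesSqAddTwoSq f) :
    (∀ n, 1 ≤ n → f n ^ 2 = 0) ∨ (∀ n, 1 ≤ n → f n ^ 2 = (n : ℂ) ^ 2) ∨
      (∀ n, 1 ≤ n → f n ^ 2 = 1 / 9) := by
  have determined (α β : ℂ) (h : ∀ k, 1 ≤ k → k ≤ 4 → f k ^ 2 = α * k ^ 2 + β) :
      ∀ n, 1 ≤ n → f n ^ 2 = α * n ^ 2 + β :=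
    eq_quadratic_of_recurrence (g := fun n ↦ f n ^ 2) hf.sq_recurrence h
  have h3 := hf.apply_three
  have h4 := hf.sq_four
  rcases hf.sq_one_sq_two_cases with ⟨ht, hs⟩ | ⟨ht, hs⟩ | ⟨ht, hs⟩
  · left
    simpa using determined 0 0 fun k _ _ ↦ by interval_cases k <;> norm_num [h3, h4, ht, hs]
  · right; left
    simpa using determined 1 0 fun k _ _ ↦ by interval_cases k <;> norm_num [h3, h4, ht, hs]
  · right; right
    simpa using determined 0 (1 / 9) fun k _ _ ↦ by
      interval_cases k <;> norm_num [h3, h4, ht, hs]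

end PreservesSqAddTwoSq

theorem conjecture_k2 (f : ℕ → ℂ)
    (hf : ∀ u v : ℕ, 0 < u → 0 < v →
      f (u ^ 2 + 2 * v ^ 2) = f u ^ 2 + 2 * f v ^ 2) :
    (∀ n : ℕ, 1 ≤ n → f n = 0) ∨
    (∀ n : ℕ, 1 ≤ n →
      ((∃ u v : ℕ, 0 < u ∧ 0 < v ∧ n = u ^ 2 + 2 * v ^ 2) → f n = (n : ℂ)) ∧
      (¬ (∃ u v : ℕ, 0 < u ∧ 0 < v ∧ n = u ^ 2 + 2 * v ^ 2) → f n = (n : ℂ) ∨ f n = -(n : ℂ))) ∨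
    (∀ n : ℕ, 1 ≤ n →
      ((∃ u v : ℕ, 0 < u ∧ 0 < v ∧ n = u ^ 2 + 2 * v ^ 2) → f n = 1 / 3) ∧
      (¬ (∃ u v : ℕ, 0 < u ∧ 0 < v ∧ n = u ^ 2 + 2 * v ^ 2) → f n = 1 / 3 ∨ f n = -(1 / 3))) := by
  rcases PreservesSqAddTwoSq.sq_classification hf with h | h | h
  · exact Or.inl fun n hn ↦ pow_eq_zero_iff two_ne_zero |>.mp (h n hn)
  · refine Or.inr (Or.inl fun n hn ↦ ⟨?_, fun _ ↦ sq_eq_sq_iff_eq_or_eq_neg.mp (h n hn)⟩)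
    rintro ⟨u, v, hu, hv, rfl⟩
    rw [hf u v hu hv, h u hu, h v hv]
    push_cast
    ring
  · refine Or.inr (Or.inr fun n hn ↦ ⟨?_, fun _ ↦ sq_eq_sq_iff_eq_or_eq_neg.mp ?_⟩)
    · rintro ⟨u, v, hu, hv, rfl⟩
      rw [hf u v hu hv, h u hu, h v hv]
      norm_num
    · rw [h n hn]
      norm_num
end

section
/- Let f : N → C satisfy f(u² + 4v²) = f(u)² + 4·f(v)² for all positive integers u, v. Then one of the following holds: (1) f(n) = 0 for every integer n with 1 ≤ n ≤ 8; (2) f(n) = n for n ∈ {5, 8}, and f(n) = n or f(n) = −n for every other integer n with 1 ≤ n ≤ 8; (3) f(n) = 1/5 for n ∈ {5, 8}, and f(n) = 1/5 or f(n) = −1/5 for every other integer n with 1 ≤ n ≤ 8. -/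
/-!
Comparing two representations `u² + 4v² = x² + 4y²` of the same number gives polynomial
relations between the values of `f`. Using 20, 40, 65, 80, 125, 185, 205 and 221 (each a sum
`u² + 4v²` in two ways), every `f n ^ 2` with `n ≤ 8`, `n ≠ 5, 8`, becomes a fixed polynomial in
`t = f 1 ^ 2`, and `t` must be a root of `t (t - 1) (25 t - 1)`. The three roots correspond to the
three solutions `0`, `n ↦ n` and `n ↦ 1/5`; the values at `5 = 1² + 4·1²` and `8 = 2² + 4·1²`
are then determined by those at `1` and `2`, signs included.
-/

def PreservesQuadForm {R : Type*} [CommSemiring R] (k : ℕ) (f : ℕ → R) : Prop :=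
  ∀ u v : ℕ, 0 < u → 0 < v → f (u ^ 2 + k * v ^ 2) = f u ^ 2 + k * f v ^ 2

section CommRing

variable {R : Type*} [CommRing R] {k : ℕ}

theorem preservesQuadForm_natCast : PreservesQuadForm k (fun n : ℕ => (n : R)) := by
  intro u v _ _
  push_cast
  rfl

theorem preservesQuadForm_const {c : R} (hc : c = c ^ 2 + k * c ^ 2) :
    PreservesQuadForm k (fun _ => c) :=
  fun _ _ _ _ => hc

theorem PreservesQuadForm.sq_add_mul_sq_eq {f : ℕ → R} (hf : PreservesQuadForm k f)
    (u v x y : ℕ) (h : u ^ 2 + k * v ^ 2 = x ^ 2 + k * y ^ 2 := by norm_num)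
    (hu : 0 < u := by norm_num) (hv : 0 < v := by norm_num)
    (hx : 0 < x := by norm_num) (hy : 0 < y := by norm_num) :
    f u ^ 2 + k * f v ^ 2 = f x ^ 2 + k * f y ^ 2 := by
  rw [← hf u v hu hv, ← hf x y hx hy, h]

namespace PreservesQuadForm

variable {f : ℕ → R}

theorem apply_five (hf : PreservesQuadForm 4 f) : f 5 = 5 * f 1 ^ 2 := by
  linear_combination hf 1 1 one_pos one_pos

theorem apply_eight (hf : PreservesQuadForm 4 f) : f 8 = f 2 ^ 2 + 4 * f 1 ^ 2 := by
  linear_combination hf 2 1 two_pos one_pos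

theorem apply_thirteen (hf : PreservesQuadForm 4 f) : f 13 = f 3 ^ 2 + 4 * f 1 ^ 2 := by
  linear_combination hf 3 1 three_pos one_pos

theorem eq_or_eq_neg_of_sq_eq_sq [NoZeroDivisors R] {c : ℕ → R}
    (hf : PreservesQuadForm 4 f) (hc : PreservesQuadForm 4 c)
    (hsq : ∀ n, 1 ≤ n → n ≤ 8 → ¬(n = 5 ∨ n = 8) → f n ^ 2 = c n ^ 2) :
    ∀ n, 1 ≤ n → n ≤ 8 →
      ((n = 5 ∨ n = 8) → f n = c n) ∧ (¬(n = 5 ∨ n = 8) → f n = c n ∨ f n = -c n) := by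
  have h1 := hsq 1 le_rfl (by norm_num) (by norm_num)
  have h2 := hsq 2 (by norm_num) (by norm_num) (by norm_num)
  refine fun n h1n hn8 => ⟨?_, fun h58 => sq_eq_sq_iff_eq_or_eq_neg.mp (hsq n h1n hn8 h58)⟩
  rintro (rfl | rfl)
  · rw [hf.apply_five, hc.apply_five, h1]
  · rw [hf.apply_eight, hc.apply_eight, h1, h2]

end PreservesQuadForm

end CommRing

/-- The quadratic in `t` through `(0, 0)`, `(1, n²)` and `(1/25, 1/25)`, i.e. `f n ^ 2` as a
function of `t = f 1 ^ 2` along the three solutions `0`, `n ↦ n` and `n ↦ 1/5`. -/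
def sqProfile {K : Type*} [Field K] (n : ℕ) (t : K) : K :=
  (25 * ((n : K) ^ 2 - 1) * t ^ 2 + (25 - (n : K) ^ 2) * t) / 24

section Field

variable {K : Type*} [Field K]

theorem sqProfile_zero (n : ℕ) : sqProfile n (0 : K) = 0 := by
  simp [sqProfile]

variable [CharZero K]

theorem sqProfile_one (n : ℕ) : sqProfile n (1 : K) = (n : K) ^ 2 := by
  rw [sqProfile]; ring

theorem sqProfile_one_div_25 (n : ℕ) : sqProfile n (1 / 25 : K) = (1 / 5) ^ 2 := by
  rw [sqProfile]; ring

namespace PreservesQuadForm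

variable {f : ℕ → K}

theorem apply_eleven_sq (hf : PreservesQuadForm 4 f) : f 11 ^ 2 = sqProfile 11 (f 1 ^ 2) := by
  rw [sqProfile]; push_cast
  linear_combination -hf.sq_add_mul_sq_eq 5 5 11 1 + 5 * (f 5 + 5 * f 1 ^ 2) * hf.apply_five

theorem apply_seven_sq (hf : PreservesQuadForm 4 f) : f 7 ^ 2 = sqProfile 7 (f 1 ^ 2) := by
  have h11 := hf.apply_eleven_sq
  rw [sqProfile] at h11 ⊢; push_cast at h11 ⊢
  linear_combination
    (-hf.sq_add_mul_sq_eq 11 5 5 7 + h11 + 3 * (f 5 + 5 * f 1 ^ 2) * hf.apply_five) / 4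

theorem apply_two_sq (hf : PreservesQuadForm 4 f) : f 2 ^ 2 = sqProfile 2 (f 1 ^ 2) := by
  have h7 := hf.apply_seven_sq
  rw [sqProfile] at h7 ⊢; push_cast at h7 ⊢
  linear_combination
    (hf.sq_add_mul_sq_eq 1 4 7 2 - 4 * hf.sq_add_mul_sq_eq 4 1 2 2 + h7) / 16

theorem apply_four_sq (hf : PreservesQuadForm 4 f) : f 4 ^ 2 = sqProfile 4 (f 1 ^ 2) := by
  have h2 := hf.apply_two_sq
  rw [sqProfile] at h2 ⊢; push_cast at h2 ⊢
  linear_combination hf.sq_add_mul_sq_eq 4 1 2 2 + 5 * h2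

theorem apply_thirteen_sq (hf : PreservesQuadForm 4 f) :
    f 13 ^ 2 = sqProfile 13 (f 1 ^ 2) := by
  have h2 := hf.apply_two_sq
  have h4 := hf.apply_four_sq
  have h11 := hf.apply_eleven_sq
  rw [sqProfile] at h2 h4 h11 ⊢; push_cast at h2 h4 h11 ⊢
  linear_combination -hf.sq_add_mul_sq_eq 11 4 13 2 + h11 + 4 * h4 - 4 * h2

theorem apply_three_sq (hf : PreservesQuadForm 4 f) : f 3 ^ 2 = sqProfile 3 (f 1 ^ 2) := by
  have h7 := hf.apply_seven_sq
  have h13 := hf.apply_thirteen_sq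
  rw [sqProfile] at h7 h13 ⊢; push_cast at h7 h13 ⊢
  linear_combination (-hf.sq_add_mul_sq_eq 3 7 13 3 + 4 * h7 - h13) / 3

theorem apply_six_sq (hf : PreservesQuadForm 4 f) : f 6 ^ 2 = sqProfile 6 (f 1 ^ 2) := by
  have h2 := hf.apply_two_sq
  have h3 := hf.apply_three_sq
  rw [sqProfile] at h2 h3 ⊢; push_cast at h2 h3 ⊢
  linear_combination hf.sq_add_mul_sq_eq 6 1 2 3 + h2 + 4 * h3

theorem apply_one_sq_trichotomy (hf : PreservesQuadForm 4 f) :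
    f 1 ^ 2 = 0 ∨ f 1 ^ 2 = 1 ∨ f 1 ^ 2 = 1 / 25 := by
  set t := f 1 ^ 2
  have h80 : (sqProfile 2 t + 4 * t) ^ 2 + 4 * sqProfile 2 t = 5 * sqProfile 4 t := by
    rw [← hf.apply_two_sq, ← hf.apply_four_sq, ← hf.apply_eight]
    linear_combination -hf.sq_add_mul_sq_eq 4 4 8 2
  have h13 : (sqProfile 3 t + 4 * t) ^ 2 = sqProfile 13 t := by
    rw [← hf.apply_three_sq, ← hf.apply_thirteen_sq, ← hf.apply_thirteen]
  rw [sqProfile, sqProfile] at h80 h13; push_cast at h80 h13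
  have key : t * ((t - 1) * (25 * t - 1)) = 0 := by linear_combination (64 * h80 - 9 * h13) / 50
  rcases mul_eq_zero.mp key with h0 | key
  · exact Or.inl h0
  rcases mul_eq_zero.mp key with h1 | h25
  · exact Or.inr (Or.inl (sub_eq_zero.mp h1))
  · exact Or.inr (Or.inr (by linear_combination h25 / 25))

theorem apply_sq_eq_sqProfile (hf : PreservesQuadForm 4 f) :
    ∀ n, 1 ≤ n → n ≤ 8 → ¬(n = 5 ∨ n = 8) → f n ^ 2 = sqProfile n (f 1 ^ 2) := by
  intro n h1n hn8 h58
  interval_cases n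
  · rw [sqProfile]; push_cast; ring
  · exact hf.apply_two_sq
  · exact hf.apply_three_sq
  · exact hf.apply_four_sq
  · exact absurd (Or.inl rfl) h58
  · exact hf.apply_six_sq
  · exact hf.apply_seven_sq
  · exact absurd (Or.inr rfl) h58

end PreservesQuadForm

end Field

theorem small_range_trichotomy_k4 (f : ℕ → ℂ)
    (hf : ∀ u v : ℕ, 0 < u → 0 < v →
      f (u ^ 2 + 4 * v ^ 2) = f u ^ 2 + 4 * f v ^ 2) :
    (∀ n : ℕ, 1 ≤ n → n ≤ 8 → f n = 0) ∨
    (∀ n : ℕ, 1 ≤ n → n ≤ 8 →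
      ((n = 5 ∨ n = 8) → f n = (n : ℂ)) ∧
      (¬ (n = 5 ∨ n = 8) → f n = (n : ℂ) ∨ f n = -(n : ℂ))) ∨
    (∀ n : ℕ, 1 ≤ n → n ≤ 8 →
      ((n = 5 ∨ n = 8) → f n = 1 / 5) ∧
      (¬ (n = 5 ∨ n = 8) → f n = 1 / 5 ∨ f n = -(1 / 5))) := by
  have hf' : PreservesQuadForm 4 f := fun u v hu hv => by exact_mod_cast hf u v hu hv
  have hsq := hf'.apply_sq_eq_sqProfile
  rcases hf'.apply_one_sq_trichotomy with ht | ht | ht <;> rw [ht] at hsq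
  · left
    intro n h1n hn8
    have hzero : PreservesQuadForm 4 (fun _ => (0 : ℂ)) := preservesQuadForm_const (by simp)
    obtain ⟨h58, hpm⟩ := hf'.eq_or_eq_neg_of_sq_eq_sq hzero
      (fun n h1n hn8 h58 => by simp [hsq n h1n hn8 h58, sqProfile_zero]) n h1n hn8
    by_cases hn : n = 5 ∨ n = 8
    · exact h58 hn
    · simpa using hpm hn
  · exact Or.inr (Or.inl (hf'.eq_or_eq_neg_of_sq_eq_sq preservesQuadForm_natCast
      (fun n h1n hn8 h58 => by rw [hsq n h1n hn8 h58, sqProfile_one])))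
  · exact Or.inr (Or.inr (hf'.eq_or_eq_neg_of_sq_eq_sq (preservesQuadForm_const (by norm_num))
      (fun n h1n hn8 h58 => by rw [hsq n h1n hn8 h58, sqProfile_one_div_25])))
end

section
/- Let f : N → C satisfy f(u² + 5v²) = f(u)² + 5·f(v)² for all positive integers u, v. Then one of the following holds: (1) f(n) = 0 for every integer n with 1 ≤ n ≤ 10; (2) f(n) = n for n ∈ {6, 9}, and f(n) = n or f(n) = −n for every other integer n with 1 ≤ n ≤ 10; (3) f(n) = 1/6 for n ∈ {6, 9}, and f(n) = 1/6 or f(n) = −1/6 for every other integer n with 1 ≤ n ≤ 10. -/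
/-!
Write `a = f 1 ^ 2`. Every number with two representations `u² + 5v²` gives a relation between
squares of values of `f`. Those at 21, 54, 69, 84, 105 and 129 are linear and force
`3 f(n)² = (n² - 1) f(2)² - (n² - 4) a` for `n ≤ 10`, `n ≠ 6, 9`, while `f 6 = 6a` and
`f 9 = f(2)² + 5a`. The coincidence `81 = 6² + 5·3² = 1² + 5·4²` then gives
`35 f(2)² = 108a² + 32a`, and those at 126 and 216 give `(36a + 175) P = 0` and
`(72a + 175) P = 0` for `P = a (a - 1) (36a - 1)`. So `a ∈ {0, 1, 1/36}`, which fixes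
`f 6`, `f 9` and every other `f(n)²`.
-/

def PreservesSqAddMulSq (k : ℕ) (f : ℕ → ℂ) : Prop :=
  ∀ u v : ℕ, 0 < u → 0 < v → f (u ^ 2 + k * v ^ 2) = f u ^ 2 + k * f v ^ 2

namespace PreservesSqAddMulSq

variable {k : ℕ} {f : ℕ → ℂ}

theorem sq_add_mul_sq_congr (hf : PreservesSqAddMulSq k f) (u v x y : ℕ)
    (h : u ^ 2 + k * v ^ 2 = x ^ 2 + k * y ^ 2) (hu : 0 < u := by norm_num)
    (hv : 0 < v := by norm_num) (hx : 0 < x := by norm_num) (hy : 0 < y := by norm_num) :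
    f u ^ 2 + k * f v ^ 2 = f x ^ 2 + k * f y ^ 2 := by
  rw [← hf u v hu hv, ← hf x y hx hy, h]

theorem apply_six (hf : PreservesSqAddMulSq 5 f) : f 6 = 6 * f 1 ^ 2 := by
  linear_combination hf 1 1 one_pos one_pos

theorem three_mul_sq_apply (hf : PreservesSqAddMulSq 5 f) {n : ℕ} (hn1 : 1 ≤ n) (hn10 : n ≤ 10)
    (hn6 : n ≠ 6) (hn9 : n ≠ 9) :
    3 * f n ^ 2 = ((n : ℂ) ^ 2 - 1) * f 2 ^ 2 - ((n : ℂ) ^ 2 - 4) * f 1 ^ 2 := by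
  have h4 : 3 * f 4 ^ 2 = 15 * f 2 ^ 2 - 12 * f 1 ^ 2 := by
    linear_combination -3 * hf.sq_add_mul_sq_congr 1 2 4 1 rfl
  have h8 : 3 * f 8 ^ 2 = 63 * f 2 ^ 2 - 60 * f 1 ^ 2 := by
    linear_combination 3 * hf.sq_add_mul_sq_congr 8 2 2 4 rfl + 5 * h4
  have h7 : 3 * f 7 ^ 2 = 48 * f 2 ^ 2 - 45 * f 1 ^ 2 := by
    linear_combination h8 - 3 * hf.sq_add_mul_sq_congr 8 1 7 2 rfl
  have h3 : 3 * f 3 ^ 2 = 8 * f 2 ^ 2 - 5 * f 1 ^ 2 := by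
    linear_combination (h7 - 3 * hf.sq_add_mul_sq_congr 7 1 3 3 rfl) / 6
  have h5 : 3 * f 5 ^ 2 = 24 * f 2 ^ 2 - 21 * f 1 ^ 2 := by
    linear_combination (3 * hf.sq_add_mul_sq_congr 2 5 7 4 rfl + h7) / 5 + h4
  have h10 : 3 * f 10 ^ 2 = 99 * f 2 ^ 2 - 96 * f 1 ^ 2 := by
    linear_combination 3 * hf.sq_add_mul_sq_congr 10 1 5 4 rfl + h5 + 5 * h4
  interval_cases n <;> first | contradiction | (norm_num; done) | (norm_num; assumption)

theorem sq_apply_two (hf : PreservesSqAddMulSq 5 f) :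
    f 2 ^ 2 = (108 * f 1 ^ 4 + 32 * f 1 ^ 2) / 35 := by
  have h3 := hf.three_mul_sq_apply (n := 3) (by norm_num) (by norm_num) (by norm_num) (by norm_num)
  have h4 := hf.three_mul_sq_apply (n := 4) (by norm_num) (by norm_num) (by norm_num) (by norm_num)
  have h81 := hf.sq_add_mul_sq_congr 6 3 1 4 rfl
  rw [hf.apply_six] at h81
  linear_combination (-3 * h81 + 5 * h3 - 5 * h4) / 35

theorem sq_apply (hf : PreservesSqAddMulSq 5 f) {n : ℕ} (hn1 : 1 ≤ n) (hn10 : n ≤ 10)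
    (hn6 : n ≠ 6) (hn9 : n ≠ 9) :
    f n ^ 2 = f 1 ^ 2 * (36 * ((n : ℂ) ^ 2 - 1) * f 1 ^ 2 + 36 - (n : ℂ) ^ 2) / 35 := by
  linear_combination hf.three_mul_sq_apply hn1 hn10 hn6 hn9 / 3
    + ((n : ℂ) ^ 2 - 1) / 3 * hf.sq_apply_two

theorem apply_nine (hf : PreservesSqAddMulSq 5 f) :
    f 9 = f 1 ^ 2 * (108 * f 1 ^ 2 + 207) / 35 := by
  have h9 : f 9 = f 2 ^ 2 + 5 * f 1 ^ 2 := by simpa using hf 2 1 two_pos one_pos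
  linear_combination h9 + hf.sq_apply_two

theorem apply_one_sq_eq (hf : PreservesSqAddMulSq 5 f) :
    f 1 ^ 2 = 0 ∨ f 1 ^ 2 = 1 ∨ f 1 ^ 2 = 1 / 36 := by
  have h3 := hf.sq_apply (n := 3) (by norm_num) (by norm_num) (by norm_num) (by norm_num)
  have h5 := hf.sq_apply (n := 5) (by norm_num) (by norm_num) (by norm_num) (by norm_num)
  have h9 := hf.apply_nine
  have h14 : f 14 = f 3 ^ 2 + 5 * f 1 ^ 2 := by simpa using hf 3 1 three_pos one_pos
  have h126 : f 1 ^ 2 * (f 1 ^ 2 - 1) * (36 * f 1 ^ 2 - 1) * (36 * f 1 ^ 2 + 175) = 0 := by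
    linear_combination (-1225 / 9 : ℂ) * (hf.sq_add_mul_sq_congr 1 5 9 3 rfl - 5 * h5
      + (f 9 + f 1 ^ 2 * (108 * f 1 ^ 2 + 207) / 35) * h9 + 5 * h3)
  have h216 : f 1 ^ 2 * (f 1 ^ 2 - 1) * (36 * f 1 ^ 2 - 1) * (72 * f 1 ^ 2 + 175) = 0 := by
    linear_combination (1225 / 32 : ℂ) * (hf.sq_add_mul_sq_congr 14 2 6 6 rfl
      - (f 14 + f 3 ^ 2 + 5 * f 1 ^ 2) * h14
      - (f 3 ^ 2 + f 1 ^ 2 * (288 * f 1 ^ 2 + 27) / 35 + 10 * f 1 ^ 2) * h3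
      + 6 * (f 6 + 6 * f 1 ^ 2) * hf.apply_six - 5 * hf.sq_apply_two)
  have h : f 1 ^ 2 * ((f 1 ^ 2 - 1) * (36 * f 1 ^ 2 - 1)) = 0 := by
    linear_combination (2 * h126 - h216) / 175
  rcases mul_eq_zero.mp h with h0 | h
  · exact Or.inl h0
  rcases mul_eq_zero.mp h with h1 | h36
  · exact Or.inr (Or.inl (by linear_combination h1))
  · exact Or.inr (Or.inr (by linear_combination h36 / 36))

theorem apply_eq_zero_of_apply_one_sq_eq_zero (hf : PreservesSqAddMulSq 5 f) (h : f 1 ^ 2 = 0)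
    (n : ℕ) (hn1 : 1 ≤ n) (hn10 : n ≤ 10) : f n = 0 := by
  by_cases hn6 : n = 6
  · rw [hn6, hf.apply_six, h, mul_zero]
  by_cases hn9 : n = 9
  · rw [hn9, hf.apply_nine, h, zero_mul, zero_div]
  have hsq := hf.sq_apply hn1 hn10 hn6 hn9
  rw [h, zero_mul, zero_div] at hsq
  exact pow_eq_zero_iff two_ne_zero |>.mp hsq

theorem apply_eq_of_apply_one_sq_eq_one (hf : PreservesSqAddMulSq 5 f) (h : f 1 ^ 2 = 1)
    (n : ℕ) (hn1 : 1 ≤ n) (hn10 : n ≤ 10) :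
    ((n = 6 ∨ n = 9) → f n = n) ∧ (¬(n = 6 ∨ n = 9) → f n = n ∨ f n = -n) := by
  refine ⟨?_, fun hn => sq_eq_sq_iff_eq_or_eq_neg.mp ?_⟩
  · rintro (rfl | rfl)
    · rw [hf.apply_six, h]
      norm_num
    · rw [hf.apply_nine, h]
      norm_num
  · obtain ⟨hn6, hn9⟩ := not_or.mp hn
    rw [hf.sq_apply hn1 hn10 hn6 hn9, h]
    ring

theorem apply_eq_of_apply_one_sq_eq_one_div_36 (hf : PreservesSqAddMulSq 5 f)
    (h : f 1 ^ 2 = 1 / 36) (n : ℕ) (hn1 : 1 ≤ n) (hn10 : n ≤ 10) :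
    ((n = 6 ∨ n = 9) → f n = 1 / 6) ∧ (¬(n = 6 ∨ n = 9) → f n = 1 / 6 ∨ f n = -(1 / 6)) := by
  refine ⟨?_, fun hn => sq_eq_sq_iff_eq_or_eq_neg.mp ?_⟩
  · rintro (rfl | rfl)
    · rw [hf.apply_six, h]
      norm_num
    · rw [hf.apply_nine, h]
      norm_num
  · obtain ⟨hn6, hn9⟩ := not_or.mp hn
    rw [hf.sq_apply hn1 hn10 hn6 hn9, h]
    ring

end PreservesSqAddMulSq

theorem small_range_trichotomy_k5 (f : ℕ → ℂ)
    (hf : ∀ u v : ℕ, 0 < u → 0 < v →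
      f (u ^ 2 + 5 * v ^ 2) = f u ^ 2 + 5 * f v ^ 2) :
    (∀ n : ℕ, 1 ≤ n → n ≤ 10 → f n = 0) ∨
    (∀ n : ℕ, 1 ≤ n → n ≤ 10 →
      ((n = 6 ∨ n = 9) → f n = (n : ℂ)) ∧
      (¬ (n = 6 ∨ n = 9) → f n = (n : ℂ) ∨ f n = -(n : ℂ))) ∨
    (∀ n : ℕ, 1 ≤ n → n ≤ 10 →
      ((n = 6 ∨ n = 9) → f n = 1 / 6) ∧
      (¬ (n = 6 ∨ n = 9) → f n = 1 / 6 ∨ f n = -(1 / 6))) := by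
  have hf : PreservesSqAddMulSq 5 f := hf
  rcases hf.apply_one_sq_eq with h | h | h
  · exact Or.inl (hf.apply_eq_zero_of_apply_one_sq_eq_zero h)
  · exact Or.inr (Or.inl (hf.apply_eq_of_apply_one_sq_eq_one h))
  · exact Or.inr (Or.inr (hf.apply_eq_of_apply_one_sq_eq_one_div_36 h))
end

section
/- Let f : N → C satisfy f(u² + 5v²) = f(u)² + 5·f(v)² for all positive integers u, v. Then one of the following holds: (1) f(n) = 0 for every positive integer n; (2) for every positive integer n, f(n) = n whenever there exist positive integers u, v with n = u² + 5v², and f(n) = n or f(n) = −n otherwise; (3) for every positive integer n, f(n) = 1/6 whenever there exist positive integers u, v with n = u² + 5v², and f(n) = 1/6 or f(n) = −1/6 otherwise. -/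
/-!
The squares `x n := f n ^ 2` satisfy the linear relations
`x u + 5 x v = x u' + 5 x v'` whenever `u² + 5v² = u'² + 5v'²`. Eight such coincidences among
`1, …, 10` force `x` to agree with a quadratic `s n² + t` there, and the coincidences
`(m + 11)² + 5(m + 5)² = (m + 1)² + 5(m + 7)²` propagate this to all `n`. The functional
equation then gives `f n = s n + 6t` for representable `n`, and squaring this at the representable
`n = 6, 9, 14` leaves only `(s, t) = (0, 0), (1, 0), (0, 1/36)`.
-/

def SatisfiesFunEq {R : Type*} [Semiring R] (f : ℕ → R) : Prop :=
  ∀ u v : ℕ, 0 < u → 0 < v → f (u ^ 2 + 5 * v ^ 2) = f u ^ 2 + 5 * f v ^ 2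

def RespectsCollisions {R : Type*} [Semiring R] (x : ℕ → R) : Prop :=
  ∀ u v u' v' : ℕ, 0 < u → 0 < v → 0 < u' → 0 < v' →
    u ^ 2 + 5 * v ^ 2 = u' ^ 2 + 5 * v' ^ 2 → x u + 5 * x v = x u' + 5 * x v'

theorem SatisfiesFunEq.respectsCollisions_sq {R : Type*} [Semiring R] {f : ℕ → R}
    (hf : SatisfiesFunEq f) : RespectsCollisions (fun n ↦ f n ^ 2) := by
  intro u v u' v' hu hv hu' hv' h
  rw [← hf u v hu hv, ← hf u' v' hu' hv', h]

namespace RespectsCollisions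

theorem eq_quadratic_of_le_ten {K : Type*} [Field K] [CharZero K] {x : ℕ → K}
    (hx : RespectsCollisions x) {k : ℕ} (hk₁ : 1 ≤ k) (hk₁₀ : k ≤ 10) :
    x k = (x 2 - x 1) / 3 * k ^ 2 + (4 * x 1 - x 2) / 3 := by
  have := hx 4 1 1 2; have := hx 7 1 3 3; have := hx 8 1 7 2; have := hx 6 3 1 4
  have := hx 8 2 2 4; have := hx 10 1 5 4; have := hx 9 3 1 5; have := hx 7 4 2 5
  interval_cases k <;> grind

theorem eq_quadratic_of_forall_le_ten {R : Type*} [CommRing R] {x : ℕ → R}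
    (hx : RespectsCollisions x) {s t : R}
    (hbase : ∀ k, 1 ≤ k → k ≤ 10 → x k = s * k ^ 2 + t) {n : ℕ} (hn : 1 ≤ n) :
    x n = s * n ^ 2 + t := by
  induction n using Nat.strong_induction_on with
  | _ n ih =>
    by_cases hsmall : n ≤ 10
    · exact hbase n hn hsmall
    obtain ⟨m, rfl⟩ : ∃ m, n = m + 11 := ⟨n - 11, by omega⟩
    have hm := hx (m + 11) (m + 5) (m + 1) (m + 7) (by omega) (by omega) (by omega) (by omega)
      (by ring)
    have h₁ := ih (m + 1) (by omega) (by omega)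
    have h₅ := ih (m + 5) (by omega) (by omega)
    have h₇ := ih (m + 7) (by omega) (by omega)
    push_cast at h₁ h₅ h₇ ⊢
    linear_combination hm + h₁ + 5 * h₇ - 5 * h₅

theorem exists_quadratic {K : Type*} [Field K] [CharZero K] {x : ℕ → K}
    (hx : RespectsCollisions x) : ∃ s t : K, ∀ n, 1 ≤ n → x n = s * n ^ 2 + t :=
  ⟨_, _, fun _ ↦ hx.eq_quadratic_of_forall_le_ten fun _ ↦ hx.eq_quadratic_of_le_ten⟩

end RespectsCollisions

namespace SatisfiesFunEq

theorem apply_sq_add_five_sq {R : Type*} [CommSemiring R] {f : ℕ → R} {s t : R}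
    (hf : SatisfiesFunEq f) (hq : ∀ n, 1 ≤ n → f n ^ 2 = s * n ^ 2 + t) {u v : ℕ}
    (hu : 0 < u) (hv : 0 < v) :
    f (u ^ 2 + 5 * v ^ 2) = s * ((u ^ 2 + 5 * v ^ 2 : ℕ) : R) + 6 * t := by
  rw [hf u v hu hv, hq u hu, hq v hv]
  push_cast
  ring

theorem quadratic_coeffs_cases {K : Type*} [Field K] [CharZero K] {f : ℕ → K} {s t : K}
    (hf : SatisfiesFunEq f) (hq : ∀ n, 1 ≤ n → f n ^ 2 = s * n ^ 2 + t) :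
    s = 0 ∧ t = 0 ∨ s = 1 ∧ t = 0 ∨ s = 0 ∧ t = 1 / 36 := by
  have key : ∀ u v : ℕ, 0 < u → 0 < v →
      (s * ((u ^ 2 + 5 * v ^ 2 : ℕ) : K) + 6 * t) ^ 2 =
        s * ((u ^ 2 + 5 * v ^ 2 : ℕ) : K) ^ 2 + t :=
    fun u v hu hv ↦ hf.apply_sq_add_five_sq hq hu hv ▸ hq _ (Nat.succ_le_of_lt (by positivity))
  have h₆ := key 1 1 one_pos one_pos
  have h₉ := key 2 1 two_pos one_pos
  have h₁₄ := key 3 1 three_pos one_pos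
  norm_num at h₆ h₉ h₁₄
  -- `(s n + 6t)² - (s n² + t)` is a quadratic in `n` vanishing at `6, 9, 14`,
  -- so its coefficients `s² - s`, `12 s t`, `36 t² - t` vanish.
  have hs : s * (s - 1) = 0 := by linear_combination (h₁₄ - h₉) / 40 - (h₉ - h₆) / 24
  have hst : s * t = 0 := by linear_combination (h₉ - h₆) / 36 - 5 / 4 * hs
  have ht : t * (36 * t - 1) = 0 := by linear_combination h₆ - 36 * hs - 72 * hst
  rcases mul_eq_zero.mp hs with rfl | hs₁
  · rcases mul_eq_zero.mp ht with rfl | ht₁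
    · exact .inl ⟨rfl, rfl⟩
    · exact .inr <| .inr ⟨rfl, by linear_combination ht₁ / 36⟩
  · obtain rfl : s = 1 := by linear_combination hs₁
    exact .inr <| .inl ⟨rfl, by simpa using hst⟩

end SatisfiesFunEq

theorem conjecture_k5 (f : ℕ → ℂ)
    (hf : ∀ u v : ℕ, 0 < u → 0 < v →
      f (u ^ 2 + 5 * v ^ 2) = f u ^ 2 + 5 * f v ^ 2) :
    (∀ n : ℕ, 1 ≤ n → f n = 0) ∨
    (∀ n : ℕ, 1 ≤ n →
      ((∃ u v : ℕ, 0 < u ∧ 0 < v ∧ n = u ^ 2 + 5 * v ^ 2) → f n = (n : ℂ)) ∧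
      (¬ (∃ u v : ℕ, 0 < u ∧ 0 < v ∧ n = u ^ 2 + 5 * v ^ 2) → f n = (n : ℂ) ∨ f n = -(n : ℂ))) ∨
    (∀ n : ℕ, 1 ≤ n →
      ((∃ u v : ℕ, 0 < u ∧ 0 < v ∧ n = u ^ 2 + 5 * v ^ 2) → f n = 1 / 6) ∧
      (¬ (∃ u v : ℕ, 0 < u ∧ 0 < v ∧ n = u ^ 2 + 5 * v ^ 2) → f n = 1 / 6 ∨ f n = -(1 / 6))) := by
  have hf : SatisfiesFunEq f := hf
  obtain ⟨s, t, hq⟩ := hf.respectsCollisions_sq.exists_quadratic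
  have hrepr : ∀ n : ℕ, (∃ u v : ℕ, 0 < u ∧ 0 < v ∧ n = u ^ 2 + 5 * v ^ 2) →
      f n = s * n + 6 * t := by
    rintro n ⟨u, v, hu, hv, rfl⟩
    exact hf.apply_sq_add_five_sq hq hu hv
  rcases hf.quadratic_coeffs_cases hq with ⟨rfl, rfl⟩ | ⟨rfl, rfl⟩ | ⟨rfl, rfl⟩
  · exact .inl fun n hn ↦ by simpa using hq n hn
  · refine .inr <| .inl fun n hn ↦ ⟨fun h ↦ by simpa using hrepr n h, fun _ ↦ ?_⟩
    exact sq_eq_sq_iff_eq_or_eq_neg.mp (by simpa using hq n hn)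
  · refine .inr <| .inr fun n hn ↦ ⟨fun h ↦ by norm_num [hrepr n h], fun _ ↦ ?_⟩
    exact sq_eq_sq_iff_eq_or_eq_neg.mp (by norm_num [hq n hn])
end
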